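/- Let Π be a ground DLP program (a classical disjunctive logic program without aggregates) and let Π' be the corresponding DFLP₁^FA program obtained by annotating every head atom and every body atom of every rule of Π with the fuzzy annotation 1. Let I ⊆ B_L be a classical interpretation and define the fuzzy interpretation I' by I'(a) = 1 if a ∈ I and I'(b) = 0 if b ∈ B_L \ I. Then I' is a fuzzy answer set of Π' if and only if I is a classical answer set of Π in the sense of Gelfond and Lifschitz. -/

import Mathlib

open scoped Classical

noncomputable section

/-- Grade membership values: elements of the unit interval [0,1]. -/
abbrev Grade := unitInterval

/-- An element ⟨X:U | C⟩ of a ground fuzzy set: a real term X, a grade U,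
and a finite conjunction C of fuzzy annotated atoms. -/
structure FuzzyPair (Atom : Type) where
  term : ℝ
  grade : Grade
  conj : List (Atom × Grade)

/-- A ground fuzzy set: a set of pairs ⟨X:U | C⟩. -/
abbrev GroundFuzzySet (Atom : Type) := Finset (FuzzyPair Atom)

/-- Fuzzy aggregate function symbols. -/
inductive AggFun
  | sumF | timesF | minF | maxF | countF

/-- Comparison operators for aggregate atoms. -/
inductive CmpOp
  | eq | ne | lt | gt | le | ge

def CmpOp.apply : CmpOp → ℝ → ℝ → Prop
  | .eq, x, t => x = t
  | .ne, x, t => x ≠ t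
  | .lt, x, t => x < t
  | .gt, x, t => x > t
  | .le, x, t => x ≤ t
  | .ge, x, t => x ≥ t

/-- A conjunction of fuzzy annotated atoms is true w.r.t. I iff every a:μ in it has μ ≤ I(a). -/
def conjTrue {Atom : Type} (I : Atom → Grade) (C : List (Atom × Grade)) : Prop :=
  ∀ p ∈ C, p.2 ≤ I p.1

/-- S_I : the multiset {{ X:U | ⟨X:U | C⟩ ∈ S and C is true w.r.t. I }}. -/
def fuzzySetEval {Atom : Type} (I : Atom → Grade) (S : GroundFuzzySet Atom) :
    Multiset (ℝ × Grade) :=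
  (S.val.filter (fun p => conjTrue I p.conj)).map (fun p => (p.term, p.grade))

/-- Minimum of the grade (second) components of a multiset; 1 on the empty multiset. -/
def minGrade (M : Multiset (ℝ × Grade)) : Grade :=
  (M.map Prod.snd).fold min 1

/-- Evaluation of a fuzzy aggregate on a multiset; `none` represents ⊥ (undefined). -/
def aggEval : AggFun → Multiset (ℝ × Grade) → Option (ℝ × Grade)
  | .sumF, M => some ((M.map Prod.fst).sum, minGrade M)
  | .timesF, M => some ((M.map Prod.fst).prod, minGrade M)
  | .minF, M => if M = 0 then none else some (sInf {x | x ∈ M.map Prod.fst}, minGrade M)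
  | .maxF, M => if M = 0 then none else some (sSup {x | x ∈ M.map Prod.fst}, minGrade M)
  | .countF, M => some ((Multiset.card M : ℝ), minGrade M)

/-- A body element: an atom or a ground fuzzy aggregate atom f(S) ≺ T. -/
inductive BodyAtom (Atom : Type)
  | atom (a : Atom)
  | agg (f : AggFun) (S : GroundFuzzySet Atom) (op : CmpOp) (T : ℝ)

/-- A body literal: a possibly negated annotated body atom. -/
structure BodyLit (Atom : Type) where
  neg : Bool
  batom : BodyAtom Atom
  grade : Grade

/-- A ground DFLP^FA rule: annotated head disjuncts and a body of literals. -/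
structure Rule (Atom : Type) where
  head : List (Atom × Grade)
  body : List (BodyLit Atom)

/-- Satisfaction of an annotated (non-negated) body atom. -/
def satBodyAtom {Atom : Type} (I : Atom → Grade) : BodyAtom Atom → Grade → Prop
  | .atom a, μ => μ ≤ I a
  | .agg f S op T, μ =>
      ∃ x ν, aggEval f (fuzzySetEval I S) = some (x, ν) ∧ CmpOp.apply op x T ∧ μ ≤ ν

/-- Satisfaction of a body literal (negation is failure of satisfaction). -/
def satLit {Atom : Type} (I : Atom → Grade) (l : BodyLit Atom) : Prop :=
  if l.neg then ¬ satBodyAtom I l.batom l.grade else satBodyAtom I l.batom l.grade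

def satBody {Atom : Type} (I : Atom → Grade) (r : Rule Atom) : Prop :=
  ∀ l ∈ r.body, satLit I l

def satHead {Atom : Type} (I : Atom → Grade) (r : Rule Atom) : Prop :=
  ∃ h ∈ r.head, h.2 ≤ I h.1

def satRule {Atom : Type} (I : Atom → Grade) (r : Rule Atom) : Prop :=
  satBody I r → satHead I r

/-- I is a fuzzy model of Π: I satisfies every rule and, for every atom a,
max{{ μ | some rule r ∈ Π has I satisfying body(r) and a:μ a head disjunct satisfied by I }} ≤ I(a). -/
def isFuzzyModel {Atom : Type} (I : Atom → Grade) (P : Set (Rule Atom)) : Prop :=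
  (∀ r ∈ P, satRule I r) ∧
  ∀ a μ, (∃ r ∈ P, satBody I r ∧ (a, μ) ∈ r.head ∧ μ ≤ I a) → μ ≤ I a

/-- ≤-minimal fuzzy model: no fuzzy model I' with I' < I (pointwise I' ≤ I and I' ≠ I). -/
def isMinimalFuzzyModel {Atom : Type} (I : Atom → Grade) (P : Set (Rule Atom)) : Prop :=
  isFuzzyModel I P ∧ ¬ ∃ I' : Atom → Grade, isFuzzyModel I' P ∧ I' ≤ I ∧ I' ≠ I

/-- The fuzzy reduct Π^I = { r ∈ Π | I satisfies body(r) }. -/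
def fuzzyReduct {Atom : Type} (P : Set (Rule Atom)) (I : Atom → Grade) : Set (Rule Atom) :=
  {r ∈ P | satBody I r}

/-- I is a fuzzy answer set of Π iff I is a ≤-minimal fuzzy model of Π^I. -/
def isFuzzyAnswerSet {Atom : Type} (I : Atom → Grade) (P : Set (Rule Atom)) : Prop :=
  isMinimalFuzzyModel I (fuzzyReduct P I)

end

noncomputable section

/-- An element ⟨X | C⟩ of a classical ground aggregate set: a real term X and a
finite conjunction C of ground atoms. -/
structure CPair (Atom : Type) where
  term : ℝ
  conj : List Atom

/-- A classical ground aggregate set. -/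
abbrev CSet (Atom : Type) := Finset (CPair Atom)

/-- A classical body element: an atom or a ground classical aggregate atom f{S} ≺ T. -/
inductive CBodyAtom (Atom : Type)
  | atom (a : Atom)
  | agg (f : AggFun) (S : CSet Atom) (op : CmpOp) (T : ℝ)

/-- A classical body literal (possibly negated). -/
structure CLit (Atom : Type) where
  neg : Bool
  batom : CBodyAtom Atom

/-- A ground classical disjunctive rule. -/
structure CRule (Atom : Type) where
  head : List Atom
  body : List (CLit Atom)

/-- S_I : the multiset {{ X | ⟨X | C⟩ ∈ S and every atom of C is in I }}. -/
def cSetEval {Atom : Type} (I : Set Atom) (S : CSet Atom) : Multiset ℝ :=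
  (S.val.filter (fun p => ∀ a ∈ p.conj, a ∈ I)).map CPair.term

/-- Evaluation of a classical aggregate; `none` means undefined. -/
def cAggEval : AggFun → Multiset ℝ → Option ℝ
  | .sumF, M => some M.sum
  | .timesF, M => some M.prod
  | .minF, M => if M = 0 then none else some (sInf {x | x ∈ M})
  | .maxF, M => if M = 0 then none else some (sSup {x | x ∈ M})
  | .countF, M => some (Multiset.card M : ℝ)

def cSatBodyAtom {Atom : Type} (I : Set Atom) : CBodyAtom Atom → Prop
  | .atom a => a ∈ I
  | .agg f S op T => ∃ x, cAggEval f (cSetEval I S) = some x ∧ CmpOp.apply op x T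

def cSatLit {Atom : Type} (I : Set Atom) (l : CLit Atom) : Prop :=
  if l.neg then ¬ cSatBodyAtom I l.batom else cSatBodyAtom I l.batom

def cSatBody {Atom : Type} (I : Set Atom) (r : CRule Atom) : Prop :=
  ∀ l ∈ r.body, cSatLit I l

def cSatHead {Atom : Type} (I : Set Atom) (r : CRule Atom) : Prop :=
  ∃ a ∈ r.head, a ∈ I

def cSatRule {Atom : Type} (I : Set Atom) (r : CRule Atom) : Prop :=
  cSatBody I r → cSatHead I r

/-- I is a classical model of a program iff it satisfies all its rules. -/
def cModel {Atom : Type} (I : Set Atom) (P : Set (CRule Atom)) : Prop :=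
  ∀ r ∈ P, cSatRule I r

/-- The DLP^A reduct Π^I = { r ∈ Π | I satisfies body(r) }. -/
def cReduct {Atom : Type} (P : Set (CRule Atom)) (I : Set Atom) : Set (CRule Atom) :=
  {r ∈ P | cSatBody I r}

/-- I is a classical answer set of Π iff I is a ⊆-minimal classical model of Π^I. -/
def cAnswerSet {Atom : Type} (I : Set Atom) (P : Set (CRule Atom)) : Prop :=
  cModel I (cReduct P I) ∧ ¬ ∃ I' : Set Atom, cModel I' (cReduct P I) ∧ I' ⊂ I

/-- Translation: annotate a classical aggregate-set element with the fuzzy annotation 1. -/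
def trPair {Atom : Type} (p : CPair Atom) : FuzzyPair Atom :=
  ⟨p.term, 1, p.conj.map (fun a => (a, 1))⟩

def trSet {Atom : Type} (S : CSet Atom) : GroundFuzzySet Atom := S.image trPair

def trBodyAtom {Atom : Type} : CBodyAtom Atom → BodyAtom Atom
  | .atom a => .atom a
  | .agg f S op T => .agg f (trSet S) op T

def trLit {Atom : Type} (l : CLit Atom) : BodyLit Atom := ⟨l.neg, trBodyAtom l.batom, 1⟩

/-- Translation of a classical rule: annotate every head and body element with 1. -/
def trRule {Atom : Type} (r : CRule Atom) : Rule Atom :=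
  ⟨r.head.map (fun a => (a, 1)), r.body.map trLit⟩

/-- The DFLP₁^FA program corresponding to a classical program. -/
def trProg {Atom : Type} (P : Set (CRule Atom)) : Set (Rule Atom) := trRule '' P

end

noncomputable section

/-- Delete all negative literals from a classical rule. -/
def dropNegCLits {Atom : Type} (r : CRule Atom) : CRule Atom :=
  ⟨r.head, r.body.filter (fun l => !l.neg)⟩

/-- The Gelfond–Lifschitz reduct of a (aggregate-free) classical program Π w.r.t. I:
delete every rule containing a negative literal not a_j with a_j ∈ I, and delete all
negative literals from the remaining rules. -/
def glReduct {Atom : Type} (P : Set (CRule Atom)) (I : Set Atom) : Set (CRule Atom) :=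
  dropNegCLits ''
    {r ∈ P | ∀ l ∈ r.body, l.neg = true →
      ∀ a : Atom, l.batom = CBodyAtom.atom a → a ∉ I}

/-- I is a classical answer set in the sense of Gelfond and Lifschitz:
a ⊆-minimal classical model of the Gelfond–Lifschitz reduct. -/
def glAnswerSet {Atom : Type} (I : Set Atom) (P : Set (CRule Atom)) : Prop :=
  cModel I (glReduct P I) ∧ ¬ ∃ I' : Set Atom, cModel I' (glReduct P I) ∧ I' ⊂ I

end

/-! Under the translation every annotation is `1`, so a fuzzy interpretation `J` satisfies a
translated rule exactly when its core `{a | 1 ≤ J a}` satisfies the classical rule, and the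
supportedness clause of a fuzzy model is vacuous. Crisp interpretations embed `Set Atom` as an
order, and every `J` lies above the crisp interpretation of its core, so a fuzzy model strictly
below `crisp I` yields a classical model strictly inside `I` and conversely. Finally, on subsets
of `I`, models of the Gelfond–Lifschitz reduct and of `{r ∈ Π | I ⊨ body r}` coincide for
aggregate-free programs. -/

section

variable {Atom : Type}

def CRule.IsAggregateFree (r : CRule Atom) : Prop :=
  ∀ l ∈ r.body, ∃ a, l.batom = CBodyAtom.atom a

def fuzzyCore (J : Atom → Grade) : Set Atom := {a | 1 ≤ J a}

noncomputable def crisp (K : Set Atom) : Atom → Grade := fun a => if a ∈ K then 1 else 0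

theorem fuzzyCore_mono {J J' : Atom → Grade} (h : J ≤ J') : fuzzyCore J ⊆ fuzzyCore J' :=
  fun a ha => le_trans ha (h a)

@[simp]
theorem fuzzyCore_crisp (K : Set Atom) : fuzzyCore (crisp K) = K := by
  ext a
  by_cases ha : a ∈ K <;> simp [fuzzyCore, crisp, ha]

theorem crisp_fuzzyCore_le (J : Atom → Grade) : crisp (fuzzyCore J) ≤ J := fun a => by
  by_cases ha : 1 ≤ J a <;> simp [crisp, fuzzyCore, ha]

theorem crisp_le_crisp_iff {K L : Set Atom} : crisp K ≤ crisp L ↔ K ⊆ L := by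
  refine ⟨fun h => by simpa using fuzzyCore_mono h, fun h a => ?_⟩
  by_cases ha : a ∈ K
  · simp [crisp, ha, h ha]
  · simp [crisp, ha]

theorem crisp_lt_crisp_iff {K L : Set Atom} : crisp K < crisp L ↔ K ⊂ L := by
  rw [lt_iff_le_not_ge, crisp_le_crisp_iff, crisp_le_crisp_iff, Set.ssubset_def]

section Translation

variable (J : Atom → Grade)

theorem satLit_trLit_iff {l : CLit Atom} {a : Atom} (ha : l.batom = CBodyAtom.atom a) :
    satLit J (trLit l) ↔ cSatLit (fuzzyCore J) l := by
  cases hneg : l.neg <;>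
    simp [satLit, cSatLit, trLit, trBodyAtom, satBodyAtom, cSatBodyAtom, fuzzyCore, ha, hneg]

theorem satBody_trRule_iff {r : CRule Atom} (hr : r.IsAggregateFree) :
    satBody J (trRule r) ↔ cSatBody (fuzzyCore J) r := by
  simp only [satBody, cSatBody, trRule, List.forall_mem_map]
  refine forall₂_congr fun l hl => ?_
  obtain ⟨a, ha⟩ := hr l hl
  exact satLit_trLit_iff J ha

theorem satHead_trRule_iff (r : CRule Atom) :
    satHead J (trRule r) ↔ cSatHead (fuzzyCore J) r := by
  simp [satHead, cSatHead, trRule, fuzzyCore]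

theorem isFuzzyModel_trProg_iff {Q : Set (CRule Atom)} (hQ : ∀ r ∈ Q, r.IsAggregateFree) :
    isFuzzyModel J (trProg Q) ↔ cModel (fuzzyCore J) Q := by
  have hrule : ∀ r ∈ Q, satRule J (trRule r) ↔ cSatRule (fuzzyCore J) r := fun r hr =>
    imp_congr (satBody_trRule_iff J (hQ r hr)) (satHead_trRule_iff J r)
  have hsupp : ∀ a μ, (∃ r ∈ trProg Q, satBody J r ∧ (a, μ) ∈ r.head ∧ μ ≤ J a) → μ ≤ J a :=
    fun _ _ ⟨_, _, _, _, h⟩ => h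
  rw [isFuzzyModel, and_iff_left hsupp]
  simp only [trProg, Set.forall_mem_image, cModel]
  exact forall₂_congr hrule

theorem fuzzyReduct_trProg {P : Set (CRule Atom)} (hP : ∀ r ∈ P, r.IsAggregateFree) :
    fuzzyReduct (trProg P) J = trProg (cReduct P (fuzzyCore J)) := by
  ext x
  simp only [fuzzyReduct, cReduct, trProg, Set.mem_sep_iff, Set.mem_image]
  constructor
  · rintro ⟨⟨r, hr, rfl⟩, hbody⟩
    exact ⟨r, ⟨hr, (satBody_trRule_iff J (hP r hr)).1 hbody⟩, rfl⟩
  · rintro ⟨r, ⟨hr, hbody⟩, rfl⟩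
    exact ⟨⟨r, hr, rfl⟩, (satBody_trRule_iff J (hP r hr)).2 hbody⟩

end Translation

theorem isMinimalFuzzyModel_crisp_trProg_iff {Q : Set (CRule Atom)}
    (hQ : ∀ r ∈ Q, r.IsAggregateFree) (I : Set Atom) :
    isMinimalFuzzyModel (crisp I) (trProg Q) ↔
      cModel I Q ∧ ¬ ∃ K : Set Atom, cModel K Q ∧ K ⊂ I := by
  have hmodel := fun J => isFuzzyModel_trProg_iff J hQ
  refine and_congr (by rw [hmodel, fuzzyCore_crisp]) (not_congr ⟨?_, ?_⟩)
  · rintro ⟨J, hJ, hJle, hJne⟩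
    have hJlt : J < crisp I := lt_of_le_of_ne hJle hJne
    refine ⟨fuzzyCore J, (hmodel J).1 hJ, ?_⟩
    rw [← crisp_lt_crisp_iff]
    exact lt_of_le_of_lt (crisp_fuzzyCore_le J) hJlt
  · rintro ⟨K, hK, hKI⟩
    have hKI' : crisp K < crisp I := crisp_lt_crisp_iff.2 hKI
    exact ⟨crisp K, (hmodel _).2 (by rwa [fuzzyCore_crisp]), hKI'.le, hKI'.ne⟩

def negBodyAvoids (I : Set Atom) (r : CRule Atom) : Prop :=
  ∀ l ∈ r.body, l.neg = true → ∀ a : Atom, l.batom = CBodyAtom.atom a → a ∉ I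

theorem cSatLit_iff_of_batom_eq_atom {K : Set Atom} {l : CLit Atom} {a : Atom}
    (ha : l.batom = CBodyAtom.atom a) : cSatLit K l ↔ if l.neg then a ∉ K else a ∈ K := by
  simp [cSatLit, cSatBodyAtom, ha]

theorem cSatBody_iff_negBodyAvoids_and_dropNegCLits {K : Set Atom} {r : CRule Atom}
    (hr : r.IsAggregateFree) :
    cSatBody K r ↔ negBodyAvoids K r ∧ cSatBody K (dropNegCLits r) := by
  simp only [cSatBody, negBodyAvoids, dropNegCLits, List.mem_filter, and_imp, ← forall_and]
  refine forall₂_congr fun l hl => ?_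
  obtain ⟨a, ha⟩ := hr l hl
  cases hneg : l.neg <;> simp [cSatLit_iff_of_batom_eq_atom ha, hneg, ha]

theorem cSatBody_dropNegCLits_mono {K I : Set Atom} {r : CRule Atom} (hr : r.IsAggregateFree)
    (hKI : K ⊆ I) (h : cSatBody K (dropNegCLits r)) : cSatBody I (dropNegCLits r) := by
  intro l hl
  obtain ⟨hmem, hpos⟩ := List.mem_filter.1 hl
  obtain ⟨a, ha⟩ := hr l hmem
  have haK := h l hl
  rw [Bool.not_eq_true'] at hpos
  rw [cSatLit_iff_of_batom_eq_atom ha, hpos, if_neg Bool.false_ne_true] at haK ⊢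
  exact hKI haK

theorem cModel_glReduct_iff {P : Set (CRule Atom)} (hP : ∀ r ∈ P, r.IsAggregateFree)
    {I K : Set Atom} (hKI : K ⊆ I) :
    cModel K (glReduct P I) ↔ cModel K (cReduct P I) := by
  change cModel K (dropNegCLits '' {r ∈ P | negBodyAvoids I r}) ↔ _
  simp only [cModel, cReduct, Set.forall_mem_image, Set.mem_sep_iff, and_imp, cSatRule]
  refine forall₂_congr fun r hr => ?_
  simp only [cSatBody_iff_negBodyAvoids_and_dropNegCLits (hP r hr)]
  refine ⟨fun h ⟨hnI, _⟩ ⟨_, hbK⟩ => h hnI hbK, fun h hnI hbK => h ⟨hnI, ?_⟩ ⟨?_, hbK⟩⟩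
  · exact cSatBody_dropNegCLits_mono (hP r hr) hKI hbK
  · exact fun l hl hneg a ha haK => hnI l hl hneg a ha (hKI haK)

theorem glAnswerSet_iff_cAnswerSet {P : Set (CRule Atom)} (hP : ∀ r ∈ P, r.IsAggregateFree)
    (I : Set Atom) : glAnswerSet I P ↔ cAnswerSet I P := by
  refine and_congr (cModel_glReduct_iff hP subset_rfl) (not_congr (exists_congr fun K => ?_))
  exact ⟨fun ⟨hK, hKI⟩ => ⟨(cModel_glReduct_iff hP hKI.1).1 hK, hKI⟩,
    fun ⟨hK, hKI⟩ => ⟨(cModel_glReduct_iff hP hKI.1).2 hK, hKI⟩⟩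

end

/-- Let Π be a ground DLP program (no aggregates) and Π' its DFLP₁^FA
translation (every atom annotated with 1). Let I ⊆ B_L be a classical interpretation and I'
the fuzzy interpretation with I'(a) = 1 if a ∈ I and I'(a) = 0 otherwise. Then I' is a fuzzy
answer set of Π' iff I is a classical answer set of Π in the Gelfond–Lifschitz sense. -/
theorem fuzzy_answer_set_iff_classical_answer_set_DLP {Atom : Type}
    (P : Set (CRule Atom))
    (hnoagg : ∀ r ∈ P, ∀ l ∈ r.body, ∃ a : Atom, l.batom = CBodyAtom.atom a)
    (I : Set Atom) (I' : Atom → Grade)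
    (hI' : ∀ a, I' a = if a ∈ I then 1 else 0) :
    isFuzzyAnswerSet I' (trProg P) ↔ glAnswerSet I P := by
  obtain rfl : I' = crisp I := funext hI'
  have hreduct : ∀ r ∈ cReduct P I, r.IsAggregateFree := fun r hr => hnoagg r hr.1
  rw [isFuzzyAnswerSet, fuzzyReduct_trProg _ hnoagg, fuzzyCore_crisp,
    isMinimalFuzzyModel_crisp_trProg_iff hreduct, glAnswerSet_iff_cAnswerSet hnoagg]
  rfl
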